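/- arXiv:2302.00925 — 2 statements merged into one kernel-verified Lean document; each statement's English description precedes it below -/
import Mathlib

section
/- Let K be a positive integer, let T₁, …, T_K be real-valued random variables on a probability space (Ω, 𝓕, P), and let C be a real-valued random variable independent of the random vector (T₁, …, T_K). Let t ∈ ℝ, define h(u) = P(C ≥ u), and assume there is c > 0 with h(u) ≥ c for all u ≤ t. Then E[ Σ_{k=1}^K 1{T_k ≤ t} · 1{T_k ≤ C} / h(T_k) ] = E[ Σ_{k=1}^K 1{T_k ≤ t} ]. -/
/-!
Since `C` is independent of `T_k`, the joint law of `(T_k, C)` is a product measure, and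
integrating out `C` first replaces `1{T_k ≤ C}` by `h(T_k) = P(C ≥ T_k)`. The weight
`1{T_k ≤ t} / h(T_k)` cancels this factor exactly, while `h ≥ c > 0` on `(-∞, t]` keeps the weight
bounded, so all integrals are finite. Summing over `k` gives the identity.
-/

open MeasureTheory ProbabilityTheory

section

variable {Ω : Type*} [MeasurableSpace Ω] {P : Measure Ω}

lemma antitone_measureReal_setOf_le [IsFiniteMeasure P] (C : Ω → ℝ) :
    Antitone fun u => P.real {ω | u ≤ C ω} :=
  fun _ _ huv => measureReal_mono fun _ hω => le_trans huv hω

theorem ProbabilityTheory.IndepFun.integral_mul_ite_le [IsFiniteMeasure P] {X C : Ω → ℝ}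
    (hX : Measurable X) (hC : Measurable C) (hXC : IndepFun X C P) {f : ℝ → ℝ}
    (hf : Measurable f) (hfi : Integrable f (P.map X)) :
    ∫ ω, f (X ω) * (if X ω ≤ C ω then 1 else 0) ∂P
      = ∫ ω, f (X ω) * P.real {ω' | X ω ≤ C ω'} ∂P := by
  set G : ℝ × ℝ → ℝ := fun p => f p.1 * (if p.1 ≤ p.2 then 1 else 0)
  have hG : Measurable G :=
    (hf.comp measurable_fst).mul (Measurable.ite (measurableSet_le measurable_fst measurable_snd)
      measurable_const measurable_const)
  have hmap : P.map (fun ω => (X ω, C ω)) = (P.map X).prod (P.map C) :=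
    (indepFun_iff_map_prod_eq_prod_map_map hX.aemeasurable hC.aemeasurable).mp hXC
  have hGi : Integrable G ((P.map X).prod (P.map C)) := by
    refine (hfi.comp_fst (P.map C)).mono hG.aestronglyMeasurable (ae_of_all _ fun p => ?_)
    simp only [G, norm_mul]
    split_ifs <;> simp
  have hinner : ∀ x, ∫ y, G (x, y) ∂(P.map C) = f x * P.real {ω | x ≤ C ω} := by
    intro x
    have hite : (fun y => if x ≤ y then (1 : ℝ) else 0) = (Set.Ici x).indicator 1 := by
      ext y; simp [Set.indicator_apply]
    simp only [G, hite, integral_const_mul, integral_indicator_one measurableSet_Ici,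
      map_measureReal_apply hC measurableSet_Ici]
    rfl
  calc ∫ ω, f (X ω) * (if X ω ≤ C ω then 1 else 0) ∂P
      = ∫ p, G p ∂((P.map X).prod (P.map C)) := by
        rw [← hmap, integral_map (hX.prodMk hC).aemeasurable hG.aestronglyMeasurable]
    _ = ∫ x, f x * P.real {ω | x ≤ C ω} ∂(P.map X) := by
        rw [integral_prod _ hGi]; simp_rw [hinner]
    _ = ∫ ω, f (X ω) * P.real {ω' | X ω ≤ C ω'} ∂P := by
        refine integral_map hX.aemeasurable (hf.mul ?_).aestronglyMeasurable
        exact (antitone_measureReal_setOf_le C).measurable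

noncomputable def ipcwWeight (P : Measure Ω) (C : Ω → ℝ) (t x : ℝ) : ℝ :=
  (if x ≤ t then 1 else 0) / P.real {ω | x ≤ C ω}

variable {C : Ω → ℝ} {t c : ℝ}

lemma measurable_ipcwWeight [IsFiniteMeasure P] : Measurable (ipcwWeight P C t) :=
  (Measurable.ite measurableSet_Iic measurable_const measurable_const).div
    (antitone_measureReal_setOf_le C).measurable

lemma abs_ipcwWeight_le (hc : 0 < c) (hcbd : ∀ u ≤ t, c ≤ P.real {ω | u ≤ C ω}) (x : ℝ) :
    |ipcwWeight P C t x| ≤ c⁻¹ := by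
  unfold ipcwWeight
  split_ifs with hx
  · rw [abs_div, abs_one, abs_of_pos (hc.trans_le (hcbd x hx)), one_div]
    exact inv_anti₀ hc (hcbd x hx)
  · simp [hc.le]

lemma ipcwWeight_mul_measureReal (hc : 0 < c) (hcbd : ∀ u ≤ t, c ≤ P.real {ω | u ≤ C ω})
    (x : ℝ) : ipcwWeight P C t x * P.real {ω | x ≤ C ω} = if x ≤ t then 1 else 0 := by
  unfold ipcwWeight
  split_ifs with hx
  · exact one_div_mul_cancel (hc.trans_le (hcbd x hx)).ne'
  · simp

lemma integrable_ipcwWeight_mul_ite [IsFiniteMeasure P] {X : Ω → ℝ} (hX : Measurable X)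
    (hC : Measurable C) (hc : 0 < c) (hcbd : ∀ u ≤ t, c ≤ P.real {ω | u ≤ C ω}) :
    Integrable (fun ω => ipcwWeight P C t (X ω) * (if X ω ≤ C ω then 1 else 0)) P := by
  have hmeas : Measurable fun ω => ipcwWeight P C t (X ω) * (if X ω ≤ C ω then 1 else 0) :=
    (measurable_ipcwWeight.comp hX).mul
      (Measurable.ite (measurableSet_le hX hC) measurable_const measurable_const)
  refine Integrable.of_bound hmeas.aestronglyMeasurable c⁻¹ (ae_of_all _ fun ω => ?_)
  have := abs_ipcwWeight_le hc hcbd (X ω)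
  split_ifs <;> simp [this, hc.le]

theorem ProbabilityTheory.IndepFun.integral_ipcwWeight_mul_ite [IsFiniteMeasure P] {X : Ω → ℝ}
    (hX : Measurable X) (hC : Measurable C) (hXC : IndepFun X C P) (hc : 0 < c)
    (hcbd : ∀ u ≤ t, c ≤ P.real {ω | u ≤ C ω}) :
    ∫ ω, ipcwWeight P C t (X ω) * (if X ω ≤ C ω then 1 else 0) ∂P
      = ∫ ω, (if X ω ≤ t then 1 else 0) ∂P := by
  have hwi : Integrable (ipcwWeight P C t) (P.map X) :=
    Integrable.of_bound measurable_ipcwWeight.aestronglyMeasurable c⁻¹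
      (ae_of_all _ (abs_ipcwWeight_le hc hcbd))
  simp only [hXC.integral_mul_ite_le hX hC measurable_ipcwWeight hwi,
    ipcwWeight_mul_measureReal hc hcbd]

end

theorem stmt_8_general {Ω : Type*} [mΩ : MeasurableSpace Ω] (P : Measure Ω) [IsProbabilityMeasure P]
    (K : ℕ) (T : Fin K → Ω → ℝ) (C : Ω → ℝ)
    (hT : ∀ k, Measurable (T k)) (hC : Measurable C)
    (hTC : ProbabilityTheory.IndepFun C (fun ω (k : Fin K) => T k ω) P)
    (t : ℝ) (h : ℝ → ℝ) (hh : ∀ u, h u = (P {ω | u ≤ C ω}).toReal)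
    (c : ℝ) (hc : 0 < c) (hcbd : ∀ u ≤ t, c ≤ h u) :
    ∫ ω, ∑ k : Fin K, (if T k ω ≤ t then (1 : ℝ) else 0) * (if T k ω ≤ C ω then (1 : ℝ) else 0)
        / h (T k ω) ∂P
      = ∫ ω, ∑ k : Fin K, (if T k ω ≤ t then (1 : ℝ) else 0) ∂P := by
  obtain rfl : h = fun u => P.real {ω | u ≤ C ω} := funext hh
  have hindep (k : Fin K) : IndepFun (T k) C P :=
    (hTC.comp measurable_id (measurable_pi_apply k)).symm
  simp only [mul_div_right_comm _ (if _ ≤ C _ then _ else _)]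
  change ∫ ω, ∑ k, ipcwWeight P C t (T k ω) * _ ∂P = _
  rw [integral_finsetSum _ fun k _ => integrable_ipcwWeight_mul_ite (hT k) hC hc hcbd,
    integral_finsetSum _ fun k _ => ?_]
  · exact Finset.sum_congr rfl fun k _ =>
      (hindep k).integral_ipcwWeight_mul_ite (hT k) hC hc hcbd
  · exact Integrable.of_bound (Measurable.ite (measurableSet_le (hT k) measurable_const)
      measurable_const measurable_const).aestronglyMeasurable 1
      (ae_of_all _ fun ω => by split_ifs <;> simp)

/-- The crucial IPCW identity (Equation (3)) for a recurrent-event process with at most `K`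
events: if `C` is independent of the vector `(T₁, …, T_K)` and `h u = P(C ≥ u) ≥ c > 0` for
`u ≤ t`, then `E[ Σ_k 1{T_k ≤ t} 1{T_k ≤ C} / h(T_k) ] = E[ Σ_k 1{T_k ≤ t} ]`. -/
theorem stmt_8 {Ω : Type*} [mΩ : MeasurableSpace Ω] (P : Measure Ω) [IsProbabilityMeasure P]
    (K : ℕ) (hK : 0 < K) (T : Fin K → Ω → ℝ) (C : Ω → ℝ)
    (hT : ∀ k, Measurable (T k)) (hC : Measurable C)
    (hTC : ProbabilityTheory.IndepFun C (fun ω (k : Fin K) => T k ω) P)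
    (t : ℝ) (h : ℝ → ℝ) (hh : ∀ u, h u = (P {ω | u ≤ C ω}).toReal)
    (c : ℝ) (hc : 0 < c) (hcbd : ∀ u ≤ t, c ≤ h u) :
    ∫ ω, ∑ k : Fin K, (if T k ω ≤ t then (1 : ℝ) else 0) * (if T k ω ≤ C ω then (1 : ℝ) else 0)
        / h (T k ω) ∂P
      = ∫ ω, ∑ k : Fin K, (if T k ω ≤ t then (1 : ℝ) else 0) ∂P :=
  stmt_8_general (mΩ := mΩ) P K T C hT hC hTC t h hh c hc hcbd
end

section
/- Let K be a positive integer, let T₁, …, T_K be real-valued random variables and X a random variable with values in a measurable space E, all on a probability space (Ω, 𝓕, P), and let C be a real-valued random variable independent of the random vector (T₁, …, T_K, X). Let t ∈ ℝ, define h(u) = P(C ≥ u), and assume there is c > 0 with h(u) ≥ c for all u ≤ t. Set Z = Σ_{k=1}^K 1{T_k ≤ t} · 1{T_k ≤ C} / h(T_k) and μ* = E[ Σ_{k=1}^K 1{T_k ≤ t} | σ(X) ]. Then for every bounded measurable function μ : E → ℝ, E[ (Z − μ(X))² ] = E[ (μ* − μ(X))² ] + A(t), where A(t) = E[Z²] −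 E[(μ*)²]. Moreover A(t) ≥ 0 and A(t) does not depend on μ. -/
open MeasureTheory ProbabilityTheory

/-!
Since `C` is independent of `(T, X)`, integrating `C` out first gives
`E[1{T_k ≤ C} / h(T_k) | T, X] = 1` on `{T_k ≤ t}`; by the tower property the IPCW statistic `Z`
and the uncensored count `Σ_k 1{T_k ≤ t}` therefore have the same conditional expectation `μ*`
given `X`. Conditional expectation is the orthogonal projection of `L²` onto the
`σ(X)`-measurable functions, so Pythagoras gives
`E[(Z - μ(X))²] = E[(μ* - μ(X))²] + E[(Z - μ*)²]`, and taking `μ = 0` identifies the last term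
with `E[Z²] - E[μ*²]`.
-/

section Pythagoras

variable {Ω : Type*} {m mΩ : MeasurableSpace Ω} {P : Measure Ω} [IsFiniteMeasure P]

lemma integral_mul_eq_integral_condExp_mul (hm : m ≤ mΩ) {f g : Ω → ℝ}
    (hg : StronglyMeasurable[m] g) (hfg : Integrable (f * g) P) (hf : Integrable f P) :
    ∫ ω, f ω * g ω ∂P = ∫ ω, P[f|m] ω * g ω ∂P :=
  calc ∫ ω, f ω * g ω ∂P = ∫ ω, P[f * g|m] ω ∂P := (integral_condExp hm).symm
    _ = ∫ ω, P[f|m] ω * g ω ∂P :=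
      integral_congr_ae (condExp_mul_of_stronglyMeasurable_right hg hfg hf)

theorem integral_sq_sub_eq_integral_sq_condExp_sub_add (hm : m ≤ mΩ) {f g : Ω → ℝ}
    (hf : MemLp f 2 P) (hgm : StronglyMeasurable[m] g) (hg : MemLp g 2 P) :
    ∫ ω, (f ω - g ω) ^ 2 ∂P
      = ∫ ω, (P[f|m] ω - g ω) ^ 2 ∂P + ∫ ω, (f ω - P[f|m] ω) ^ 2 ∂P := by
  set ν := P[f|m]
  have hν : MemLp ν 2 P := hf.condExp one_le_two
  have hres : MemLp (f - ν) 2 P := hf.sub hν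
  have hres_condExp : P[f - ν|m] =ᵐ[P] 0 := by
    filter_upwards [condExp_sub (hf.integrable one_le_two) (hν.integrable one_le_two) m]
      with ω hω
    rw [hω, condExp_of_stronglyMeasurable hm stronglyMeasurable_condExp integrable_condExp]
    simp
  have hcross : ∫ ω, (f - ν) ω * (ν - g) ω ∂P = 0 := by
    rw [integral_mul_eq_integral_condExp_mul hm (stronglyMeasurable_condExp.sub hgm)
      (hres.integrable_mul (hν.sub hg)) (hres.integrable one_le_two)]
    exact (integral_congr_ae (hres_condExp.mul (ae_eq_refl _))).trans (by simp)
  have hexpand : ∀ ω, (f ω - g ω) ^ 2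
      = ((ν ω - g ω) ^ 2 + (f ω - ν ω) ^ 2) + 2 * ((f - ν) ω * (ν - g) ω) := by
    intro ω; simp only [Pi.sub_apply]; ring
  have hsq₁ : Integrable (fun ω => (ν ω - g ω) ^ 2) P := (hν.sub hg).integrable_sq
  have hsq₂ : Integrable (fun ω => (f ω - ν ω) ^ 2) P := hres.integrable_sq
  have hprod : Integrable (fun ω => 2 * ((f - ν) ω * (ν - g) ω)) P :=
    (hres.integrable_mul (hν.sub hg)).const_mul 2
  have hsq : Integrable (fun ω => (ν ω - g ω) ^ 2 + (f ω - ν ω) ^ 2) P := hsq₁.add hsq₂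
  simp_rw [hexpand]
  rw [integral_add hsq hprod, integral_add hsq₁ hsq₂, integral_const_mul, hcross,
    mul_zero, add_zero]

theorem integral_sq_sub_condExp (hm : m ≤ mΩ) {f : Ω → ℝ} (hf : MemLp f 2 P) :
    ∫ ω, (f ω - P[f|m] ω) ^ 2 ∂P = ∫ ω, f ω ^ 2 ∂P - ∫ ω, P[f|m] ω ^ 2 ∂P := by
  have := integral_sq_sub_eq_integral_sq_condExp_sub_add hm hf stronglyMeasurable_const
    (memLp_const (0 : ℝ))
  simp only [sub_zero] at this
  linarith

end Pythagoras

lemma abs_ite_div_le {G : ℝ → ℝ} {t c : ℝ} (hc : 0 < c) (hG : ∀ u ≤ t, c ≤ G u) (u : ℝ) :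
    |(if u ≤ t then (1 : ℝ) else 0) / G u| ≤ 1 / c := by
  split_ifs with hu
  · rw [abs_of_pos (one_div_pos.2 (hc.trans_le (hG u hu)))]
    exact one_div_le_one_div_of_le hc (hG u hu)
  · simp only [zero_div, abs_zero, one_div, inv_nonneg]
    exact hc.le

namespace ProbabilityTheory

variable {Ω β γ : Type*} {mΩ : MeasurableSpace Ω} [MeasurableSpace β] {mγ : MeasurableSpace γ}
  {P : Measure Ω}

lemma integral_map_ite_le {C : Ω → ℝ} (hC : Measurable C) (u : ℝ) :
    ∫ c, (if u ≤ c then (1 : ℝ) else 0) ∂(P.map C) = P.real {ω | u ≤ C ω} := by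
  have hind : (fun c : ℝ => if u ≤ c then (1 : ℝ) else 0) = (Set.Ici u).indicator 1 := by
    ext c; simp [Set.indicator_apply]
  rw [hind, integral_indicator_one measurableSet_Ici, map_measureReal_apply hC measurableSet_Ici]
  rfl

variable [IsFiniteMeasure P]

theorem IndepFun.integral_comp_prodMk_eq_integral_integral {E : Type*} [NormedAddCommGroup E]
    [NormedSpace ℝ E] {C : Ω → β} {V : Ω → γ} (hCV : C ⟂ᵢ[P] V) (hC : Measurable C)
    (hV : Measurable V) {F : β × γ → E} (hFm : StronglyMeasurable F)
    (hF : Integrable F ((P.map C).prod (P.map V))) :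
    ∫ ω, F (C ω, V ω) ∂P = ∫ ω, ∫ c, F (c, V ω) ∂(P.map C) ∂P := by
  rw [← integral_map (f := F) (hC.prodMk hV).aemeasurable hFm.aestronglyMeasurable,
    (indepFun_iff_map_prod_eq_prod_map_map hC.aemeasurable hV.aemeasurable).1 hCV,
    integral_prod_symm F hF,
    integral_map hV.aemeasurable hFm.integral_prod_left'.aestronglyMeasurable]

lemma antitone_measureReal_le (C : Ω → ℝ) : Antitone fun u => P.real {ω | u ≤ C ω} :=
  fun _ _ huv => measureReal_mono fun _ hω => huv.trans hω

lemma memLp_ipcw {S C : Ω → ℝ} (hS : Measurable S) (hC : Measurable C) {t c : ℝ} (hc : 0 < c)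
    (hsurv : ∀ u ≤ t, c ≤ P.real {ω | u ≤ C ω}) (p : ENNReal) :
    MemLp (fun ω => (if S ω ≤ t then (1 : ℝ) else 0) * (if S ω ≤ C ω then 1 else 0)
      / P.real {ω' | S ω ≤ C ω'}) p P := by
  refine MemLp.of_bound (Measurable.aestronglyMeasurable ?_) (1 / c) (.of_forall fun ω => ?_)
  · exact ((Measurable.ite (measurableSet_le hS measurable_const) measurable_const
      measurable_const).mul (Measurable.ite (measurableSet_le hS hC) measurable_const
      measurable_const)).div ((antitone_measureReal_le C).measurable.comp hS)
  · rw [Real.norm_eq_abs, mul_div_right_comm, abs_mul]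
    exact (mul_le_of_le_one_right (abs_nonneg _) (by split_ifs <;> simp)).trans
      (abs_ite_div_le hc hsurv (S ω))

lemma memLp_ite_le {S : Ω → ℝ} (hS : Measurable S) (t : ℝ) (p : ENNReal) :
    MemLp (fun ω => if S ω ≤ t then (1 : ℝ) else 0) p P :=
  MemLp.of_bound (Measurable.ite (measurableSet_le hS measurable_const) measurable_const
    measurable_const).aestronglyMeasurable 1 (.of_forall fun ω => by split_ifs <;> simp)

theorem IndepFun.integral_mul_ite_le_s10 {C : Ω → ℝ} {V : Ω → γ} (hCV : C ⟂ᵢ[P] V)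
    (hC : Measurable C) (hV : Measurable V) {ψ s : γ → ℝ} (hψ : Measurable ψ)
    (hs : Measurable s) {B : ℝ} (hψB : ∀ v, |ψ v| ≤ B) :
    ∫ ω, ψ (V ω) * (if s (V ω) ≤ C ω then 1 else 0) ∂P
      = ∫ ω, ψ (V ω) * P.real {ω' | s (V ω) ≤ C ω'} ∂P := by
  set F : ℝ × γ → ℝ := fun p => ψ p.2 * if s p.2 ≤ p.1 then 1 else 0
  have hFm : Measurable F := (hψ.comp measurable_snd).mul
    (Measurable.ite (measurableSet_le (hs.comp measurable_snd) measurable_fst)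
      measurable_const measurable_const)
  have hFB : ∀ p, ‖F p‖ ≤ B := fun p => by
    rw [Real.norm_eq_abs, abs_mul]
    exact (mul_le_of_le_one_right (abs_nonneg _) (by split_ifs <;> simp)).trans (hψB p.2)
  rw [hCV.integral_comp_prodMk_eq_integral_integral hC hV hFm.stronglyMeasurable
    (Integrable.of_bound hFm.aestronglyMeasurable B (.of_forall hFB))]
  simp_rw [F, integral_const_mul, integral_map_ite_le hC]

theorem IndepFun.setIntegral_preimage_ipcw {C : Ω → ℝ} {V : Ω → γ} (hCV : C ⟂ᵢ[P] V)
    (hC : Measurable C) (hV : Measurable V) {s : γ → ℝ} (hs : Measurable s) {t c : ℝ}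
    (hc : 0 < c) (hsurv : ∀ u ≤ t, c ≤ P.real {ω | u ≤ C ω}) {A : Set γ} (hA : MeasurableSet A) :
    ∫ ω in V ⁻¹' A, (if s (V ω) ≤ t then 1 else 0) * (if s (V ω) ≤ C ω then 1 else 0)
        / P.real {ω' | s (V ω) ≤ C ω'} ∂P
      = ∫ ω in V ⁻¹' A, (if s (V ω) ≤ t then 1 else 0) ∂P := by
  set w : γ → ℝ := fun v => (if s v ≤ t then 1 else 0) / P.real {ω | s v ≤ C ω}
  have hw : Measurable w :=
    (Measurable.ite (measurableSet_le hs measurable_const) measurable_const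
      measurable_const).div ((antitone_measureReal_le C).measurable.comp hs)
  have hwA : ∀ v, |A.indicator w v| ≤ 1 / c := fun v => by
    by_cases hv : v ∈ A
    · simpa [hv] using abs_ite_div_le hc hsurv (s v)
    · simpa [hv] using (one_div_pos.2 hc).le
  rw [← integral_indicator (hV hA), ← integral_indicator (hV hA)]
  calc ∫ ω, (V ⁻¹' A).indicator (fun ω => (if s (V ω) ≤ t then 1 else 0)
          * (if s (V ω) ≤ C ω then 1 else 0) / P.real {ω' | s (V ω) ≤ C ω'}) ω ∂P
      = ∫ ω, A.indicator w (V ω) * (if s (V ω) ≤ C ω then 1 else 0) ∂P := by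
        congr 1; ext ω
        by_cases hω : V ω ∈ A
        · rw [Set.indicator_of_mem (show ω ∈ V ⁻¹' A from hω), Set.indicator_of_mem hω]
          exact mul_div_right_comm _ _ _
        · simp [hω]
    _ = ∫ ω, A.indicator w (V ω) * P.real {ω' | s (V ω) ≤ C ω'} ∂P :=
        hCV.integral_mul_ite_le_s10 hC hV (hw.indicator hA) hs hwA
    _ = ∫ ω, (V ⁻¹' A).indicator (fun ω => if s (V ω) ≤ t then 1 else 0) ω ∂P := by
        congr 1; ext ω
        by_cases hω : V ω ∈ A
        · by_cases hst : s (V ω) ≤ t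
          · have hpos : P.real {ω' | s (V ω) ≤ C ω'} ≠ 0 := (hc.trans_le (hsurv _ hst)).ne'
            simp [hω, hst, w, hpos]
          · simp [hω, hst, w]
        · simp [hω]

theorem IndepFun.condExp_ipcw {C : Ω → ℝ} {V : Ω → γ} (hCV : C ⟂ᵢ[P] V) (hC : Measurable C)
    (hV : Measurable V) {s : γ → ℝ} (hs : Measurable s) {t c : ℝ} (hc : 0 < c)
    (hsurv : ∀ u ≤ t, c ≤ P.real {ω | u ≤ C ω}) :
    P[fun ω => (if s (V ω) ≤ t then 1 else 0) * (if s (V ω) ≤ C ω then 1 else 0)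
        / P.real {ω' | s (V ω) ≤ C ω'} | mγ.comap V]
      =ᵐ[P] fun ω => if s (V ω) ≤ t then 1 else 0 := by
  have hYm : Measurable[mγ.comap V] fun ω => if s (V ω) ≤ t then (1 : ℝ) else 0 :=
    Measurable.ite (measurableSet_le (hs.comp (comap_measurable V)) measurable_const)
      measurable_const measurable_const
  refine (ae_eq_condExp_of_forall_setIntegral_eq hV.comap_le
    ((memLp_ipcw (S := fun ω => s (V ω)) (hs.comp hV) hC hc hsurv 1).integrable le_rfl)
    (fun _ _ _ => ((memLp_ite_le (hs.comp hV) t 1).integrable le_rfl).integrableOn) ?_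
    hYm.aestronglyMeasurable).symm
  rintro _ ⟨A, hA, rfl⟩ -
  exact (hCV.setIntegral_preimage_ipcw hC hV hs hc hsurv hA).symm

end ProbabilityTheory

section RecurrentEvents

variable {Ω ι E : Type*} {mΩ : MeasurableSpace Ω} {mE : MeasurableSpace E} {P : Measure Ω}
  [IsFiniteMeasure P] [Fintype ι]

theorem condExp_comap_sum_ipcw_ae_eq {T : ι → Ω → ℝ} {X : Ω → E} {C : Ω → ℝ}
    (hT : ∀ k, Measurable (T k)) (hX : Measurable X) (hC : Measurable C)
    (hTXC : C ⟂ᵢ[P] fun ω => ((fun k => T k ω), X ω)) {t c : ℝ} (hc : 0 < c)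
    (hsurv : ∀ u ≤ t, c ≤ P.real {ω | u ≤ C ω}) :
    P[fun ω => ∑ k, (if T k ω ≤ t then (1 : ℝ) else 0) * (if T k ω ≤ C ω then 1 else 0)
        / P.real {ω' | T k ω ≤ C ω'} | mE.comap X]
      =ᵐ[P] P[fun ω => ∑ k, if T k ω ≤ t then (1 : ℝ) else 0 | mE.comap X] := by
  set W : Ω → (ι → ℝ) × E := fun ω => ((fun k => T k ω), X ω)
  have hW : Measurable W := (measurable_pi_lambda _ hT).prodMk hX
  have hXW : mE.comap X ≤ MeasurableSpace.comap W inferInstance :=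
    (measurable_snd.comp (comap_measurable W)).comap_le
  set Z : ι → Ω → ℝ := fun k ω => (if T k ω ≤ t then (1 : ℝ) else 0)
    * (if T k ω ≤ C ω then 1 else 0) / P.real {ω' | T k ω ≤ C ω'}
  set Y : ι → Ω → ℝ := fun k ω => if T k ω ≤ t then (1 : ℝ) else 0
  have hZi : ∀ k, Integrable (Z k) P := fun k =>
    (memLp_ipcw (hT k) hC hc hsurv 1).integrable le_rfl
  have hYi : ∀ k, Integrable (Y k) P := fun k => (memLp_ite_le (hT k) t 1).integrable le_rfl
  have hterm : ∀ᵐ ω ∂P, ∀ k, P[Z k | mE.comap X] ω = P[Y k | mE.comap X] ω :=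
    ae_all_iff.2 fun k => (condExp_condExp_of_le hXW hW.comap_le).symm.trans
      (condExp_congr_ae (hTXC.condExp_ipcw hC hW
        ((measurable_pi_apply k).comp measurable_fst) hc hsurv))
  change P[fun ω => ∑ k, Z k ω | mE.comap X] =ᵐ[P] P[fun ω => ∑ k, Y k ω | mE.comap X]
  rw [← Finset.sum_fn, ← Finset.sum_fn]
  filter_upwards [condExp_finsetSum (s := .univ) (fun k _ => hZi k) (mE.comap X),
    condExp_finsetSum (s := .univ) (fun k _ => hYi k) (mE.comap X), hterm] with ω hZω hYω hω
  simp only [hZω, hYω, Finset.sum_apply, hω]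

end RecurrentEvents

theorem stmt_10_general {Ω : Type*} [mΩ : MeasurableSpace Ω] (P : Measure Ω) [IsProbabilityMeasure P]
    {E : Type*} [mE : MeasurableSpace E]
    (K : ℕ) (T : Fin K → Ω → ℝ) (X : Ω → E) (C : Ω → ℝ)
    (hT : ∀ k, Measurable (T k)) (hX : Measurable X) (hC : Measurable C)
    (hTXC : ProbabilityTheory.IndepFun C (fun ω => ((fun k : Fin K => T k ω), X ω)) P)
    (t : ℝ) (h : ℝ → ℝ) (hh : ∀ u, h u = (P {ω | u ≤ C ω}).toReal)
    (c : ℝ) (hc : 0 < c) (hcbd : ∀ u ≤ t, c ≤ h u)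
    (Z : Ω → ℝ)
    (hZ : ∀ ω, Z ω = ∑ k : Fin K, (if T k ω ≤ t then (1 : ℝ) else 0)
      * (if T k ω ≤ C ω then (1 : ℝ) else 0) / h (T k ω))
    (μstar : Ω → ℝ)
    (hμstar : μstar = P[fun ω => ∑ k : Fin K, (if T k ω ≤ t then (1 : ℝ) else 0)
      | MeasurableSpace.comap X mE])
    (μ : E → ℝ) (hμ : Measurable μ) (Cμ : ℝ) (hμbd : ∀ x, |μ x| ≤ Cμ) :
    (∫ ω, (Z ω - μ (X ω)) ^ 2 ∂P)
      = (∫ ω, (μstar ω - μ (X ω)) ^ 2 ∂P)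
        + ((∫ ω, (Z ω) ^ 2 ∂P) - ∫ ω, (μstar ω) ^ 2 ∂P) ∧
    0 ≤ (∫ ω, (Z ω) ^ 2 ∂P) - ∫ ω, (μstar ω) ^ 2 ∂P := by
  obtain rfl : h = fun u => P.real {ω | u ≤ C ω} := funext hh
  have hm : MeasurableSpace.comap X mE ≤ mΩ := hX.comap_le
  have hZ2 : MemLp Z 2 P := by
    rw [show Z = _ from funext hZ, ← Finset.sum_fn]
    exact memLp_finsetSum' _ fun k _ => memLp_ipcw (hT k) hC hc hcbd 2
  have hμX2 : MemLp (fun ω => μ (X ω)) 2 P :=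
    MemLp.of_bound (hμ.comp hX).aestronglyMeasurable Cμ (.of_forall fun ω => hμbd (X ω))
  have hμstar_ae : μstar =ᵐ[P] P[Z | MeasurableSpace.comap X mE] := by
    rw [hμstar, show Z = _ from funext hZ]
    exact (condExp_comap_sum_ipcw_ae_eq hT hX hC hTXC hc hcbd).symm
  have hpyth := integral_sq_sub_eq_integral_sq_condExp_sub_add hm hZ2
    (hμ.comp (comap_measurable X)).stronglyMeasurable hμX2
  have hsq : ∫ ω, μstar ω ^ 2 ∂P = ∫ ω, P[Z | MeasurableSpace.comap X mE] ω ^ 2 ∂P :=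
    integral_congr_ae (hμstar_ae.mono fun ω hω => by simp only [hω])
  have hsub : ∫ ω, (μstar ω - μ (X ω)) ^ 2 ∂P
      = ∫ ω, (P[Z | MeasurableSpace.comap X mE] ω - μ (X ω)) ^ 2 ∂P :=
    integral_congr_ae (hμstar_ae.mono fun ω hω => by simp only [hω])
  rw [hsq, hsub, ← integral_sq_sub_condExp hm hZ2]
  exact ⟨hpyth, integral_nonneg fun ω => sq_nonneg _⟩

/-- Proposition 1 of the paper (right-censoring, no terminal event) for a recurrent-event
process with at most `K` events: with `Z = Σ_k 1{T_k ≤ t} 1{T_k ≤ C} / h(T_k)` and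
`μ* = E[Σ_k 1{T_k ≤ t} | σ(X)]`, for every bounded measurable model `μ`,
`E[(Z − μ(X))²] = E[(μ* − μ(X))²] + A(t)` with `A(t) = E[Z²] − E[(μ*)²] ≥ 0`
not depending on `μ`. -/
theorem stmt_10 {Ω : Type*} [mΩ : MeasurableSpace Ω] (P : Measure Ω) [IsProbabilityMeasure P]
    {E : Type*} [mE : MeasurableSpace E]
    (K : ℕ) (hK : 0 < K) (T : Fin K → Ω → ℝ) (X : Ω → E) (C : Ω → ℝ)
    (hT : ∀ k, Measurable (T k)) (hX : Measurable X) (hC : Measurable C)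
    (hTXC : ProbabilityTheory.IndepFun C (fun ω => ((fun k : Fin K => T k ω), X ω)) P)
    (t : ℝ) (h : ℝ → ℝ) (hh : ∀ u, h u = (P {ω | u ≤ C ω}).toReal)
    (c : ℝ) (hc : 0 < c) (hcbd : ∀ u ≤ t, c ≤ h u)
    (Z : Ω → ℝ)
    (hZ : ∀ ω, Z ω = ∑ k : Fin K, (if T k ω ≤ t then (1 : ℝ) else 0)
      * (if T k ω ≤ C ω then (1 : ℝ) else 0) / h (T k ω))
    (μstar : Ω → ℝ)
    (hμstar : μstar = P[fun ω => ∑ k : Fin K, (if T k ω ≤ t then (1 : ℝ) else 0)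
      | MeasurableSpace.comap X mE])
    (μ : E → ℝ) (hμ : Measurable μ) (Cμ : ℝ) (hμbd : ∀ x, |μ x| ≤ Cμ) :
    (∫ ω, (Z ω - μ (X ω)) ^ 2 ∂P)
      = (∫ ω, (μstar ω - μ (X ω)) ^ 2 ∂P)
        + ((∫ ω, (Z ω) ^ 2 ∂P) - ∫ ω, (μstar ω) ^ 2 ∂P) ∧
    0 ≤ (∫ ω, (Z ω) ^ 2 ∂P) - ∫ ω, (μstar ω) ^ 2 ∂P :=
  stmt_10_general (mΩ := mΩ) P (mE := mE) K T X C hT hX hC hTXC t h hh c hc hcbd Z hZ μstar hμstar μ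
    hμ Cμ hμbd
end
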